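/- The function f is submodular in the lattice sense: for all finite sets of labeled points A and B, one has f(A ∪ B) + f(A ∩ B) ≤ f(A) + f(B). -/

import Mathlib

open scoped Classical

/-- The set of hypotheses in `H` consistent with every labeled point in `A`. -/
def consistentSet {X Y : Type*} [DecidableEq Y] (H : Finset (X → Y))
    (A : Finset (X × Y)) : Finset (X → Y) :=
  H.filter fun h => ∀ p ∈ A, h p.1 = p.2

/-- `f(A) = 1 − |H_A| / |H|`. -/
noncomputable def fval {X Y : Type*} [DecidableEq Y] (H : Finset (X → Y))
    (A : Finset (X × Y)) : ℝ :=
  1 - (consistentSet H A).card / H.card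

/-! The version-space map `A ↦ H_A` sends unions to intersections and intersections into
supersets of unions, so `|H_A|` is supermodular by inclusion–exclusion; `f` is an affine
image of it with a nonpositive slope. -/

section ConsistentSet

variable {X Y : Type*} [DecidableEq X] [DecidableEq Y] (H : Finset (X → Y)) (A B : Finset (X × Y))

theorem consistentSet_union :
    consistentSet H (A ∪ B) = consistentSet H A ∩ consistentSet H B := by
  ext h
  simp only [consistentSet, Finset.mem_filter, Finset.mem_inter, Finset.mem_union, or_imp,
    forall_and]
  tauto

theorem consistentSet_union_subset_consistentSet_inter :
    consistentSet H A ∪ consistentSet H B ⊆ consistentSet H (A ∩ B) := by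
  intro h hh
  simp only [consistentSet, Finset.mem_filter, Finset.mem_union, Finset.mem_inter] at hh ⊢
  rcases hh with ⟨hH, hA⟩ | ⟨hH, hB⟩
  · exact ⟨hH, fun p hp => hA p hp.1⟩
  · exact ⟨hH, fun p hp => hB p hp.2⟩

theorem card_consistentSet_add_card_le :
    (consistentSet H A).card + (consistentSet H B).card ≤
      (consistentSet H (A ∪ B)).card + (consistentSet H (A ∩ B)).card := by
  rw [← Finset.card_inter_add_card_union, consistentSet_union]
  exact Nat.add_le_add_left
    (Finset.card_le_card (consistentSet_union_subset_consistentSet_inter H A B)) _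

end ConsistentSet

theorem fval_submodular_lattice_general {X Y : Type*} [DecidableEq X] [DecidableEq Y]
    (H : Finset (X → Y))
    (A B : Finset (X × Y)) :
    fval H (A ∪ B) + fval H (A ∩ B) ≤ fval H A + fval H B := by
  have hcard : (((consistentSet H A).card + (consistentSet H B).card : ℕ) : ℝ) / H.card ≤
      (((consistentSet H (A ∪ B)).card + (consistentSet H (A ∩ B)).card : ℕ) : ℝ) / H.card :=
    div_le_div_of_nonneg_right (by exact_mod_cast card_consistentSet_add_card_le H A B)
      H.card.cast_nonneg
  push_cast [add_div] at hcard
  unfold fval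
  linarith

/-- `f` is submodular in the lattice sense:
`f(A ∪ B) + f(A ∩ B) ≤ f(A) + f(B)`. -/
theorem fval_submodular_lattice {X Y : Type*} [DecidableEq X] [DecidableEq Y]
    (H : Finset (X → Y)) (hH : H.Nonempty)
    (A B : Finset (X × Y)) :
    fval H (A ∪ B) + fval H (A ∩ B) ≤ fval H A + fval H B :=
  fval_submodular_lattice_general H A B
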